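/- Let H be a ℤ-graded Hopf algebra over a field k satisfying the twisting conditions, whose antipode S satisfies S(H_n) ⊆ H_{-n} for all n ∈ ℤ. Let α = {α_i}_{i∈ℤ} be a system of twisting functionals on H with convolution inverses {α_i^{-1}}. Then for all i, j ∈ ℤ, all integers m ≥ 0, and all homogeneous a ∈ H_j: α_i(S^m(a)) = α_i(a) if m is even and α_i(S^m(a)) = (α_{-j} * α_{i-j}^{-1})(a) if m is odd; likewise α_i^{-1}(S^m(a)) = α_i^{-1}(a) if m is even and α_i^{-1}(S^m(a)) = (α_{i-j} * α_{-j}^{-1})(a) if m is odd. -/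

import Mathlib

/-!
Work in the convolution algebra `WithConv (H →ₗ[k] k)`, where the `α i` become units `u i`.
Call `f` twisted by `w` on a submodule `V` if `f (x * c) = f x * w c` for all `x ∈ V`. The
twisting condition says that `u p` is twisted by `u (p + n) * (u n)⁻¹` on `H_n`; twistedness is
stable under convolution products and inverses, so `u p * (u q)⁻¹` is twisted by
`u (p + n) * (u (q + n))⁻¹`. As `S` is the convolution inverse of the identity, a functional `f`
twisted by `w` on `H_{-j}` satisfies `f (S x) = f 1 * w⁻¹ x` on `H_j`. Hence, on `H_j`, `S`
turns `u p * (u q)⁻¹` into `u (q - j) * (u (p - j))⁻¹`, an operation of order two; `α i` and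
`αinv i` are the cases `(p, q) = (i, 0)` and `(0, i)`.
-/

open TensorProduct

noncomputable def conv {k B : Type*} [CommSemiring k] [AddCommMonoid B] [Module k B]
    [Coalgebra k B] (f g : B →ₗ[k] k) : B →ₗ[k] k :=
  LinearMap.mul' k k ∘ₗ TensorProduct.map f g ∘ₗ Coalgebra.comul

open Coalgebra WithConv LinearMap

section Coalgebra
variable {k H : Type*} [CommSemiring k] [AddCommMonoid H] [Module k H] [Coalgebra k H]

lemma toConv_conv (f g : H →ₗ[k] k) : toConv (conv f g) = toConv f * toConv g := rfl

lemma toConv_counit : toConv (counit : H →ₗ[k] k) = 1 := by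
  ext; rfl

lemma Coalgebra.exists_repr_mem_of_comul_mem_range {V : Submodule k H} {x : H}
    (hx : comul (R := k) x ∈ range (mapIncl V V)) :
    ∃ ℛx : Repr k x (V × V), ∀ i, ℛx.left i ∈ V ∧ ℛx.right i ∈ V := by
  obtain ⟨t, ht⟩ := hx
  obtain ⟨s, rfl⟩ := TensorProduct.exists_finset t
  exact ⟨⟨s, fun p => p.1, fun p => p.2, by simp [← ht, map_sum, mapIncl]⟩,
    fun p => ⟨p.1.2, p.2.2⟩⟩

lemma convMul_apply_congr_left {W : Submodule k H}
    (hW : ∀ x ∈ W, comul (R := k) x ∈ range (mapIncl W W)) {f₁ f₂ : WithConv (H →ₗ[k] k)}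
    (h : ∀ y ∈ W, f₁ y = f₂ y) (g : WithConv (H →ₗ[k] k)) {x : H} (hx : x ∈ W) :
    (f₁ * g) x = (f₂ * g) x := by
  obtain ⟨ℛx, hℛx⟩ := exists_repr_mem_of_comul_mem_range (hW x hx)
  simp only [ℛx.convMul_apply]
  exact Finset.sum_congr rfl fun i _ => by rw [h _ (hℛx i).1]

end Coalgebra

section Bialgebra
variable {k H : Type*} [CommSemiring k] [Semiring H] [Bialgebra k H]

lemma convMul_apply_one (f g : WithConv (H →ₗ[k] k)) : (f * g) 1 = f 1 * g 1 := by
  simp [Algebra.TensorProduct.one_def]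

lemma apply_one_eq_one_of_convMul_eq_one {f g : WithConv (H →ₗ[k] k)} (hfg : f * g = 1)
    (hf : f 1 = 1) : g 1 = 1 := by
  have h1 := congr($hfg 1)
  rw [convMul_apply_one, hf, one_mul] at h1
  simpa using h1

lemma toConv_comp_mulLeft_convMul {x : H} {ι : Type*} (ℛx : Repr k x ι)
    (f g : WithConv (H →ₗ[k] k)) :
    toConv ((f * g).ofConv ∘ₗ mulLeft k x) = ∑ i ∈ ℛx.index,
      toConv (f.ofConv ∘ₗ mulLeft k (ℛx.left i)) * toConv (g.ofConv ∘ₗ mulLeft k (ℛx.right i)) := by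
  ext c
  simp [(ℛx.mul (ℛ k c)).convMul_apply, (ℛ k c).convMul_apply, Finset.sum_product]

lemma toConv_comp_mulLeft_convOne (x : H) :
    toConv ((1 : WithConv (H →ₗ[k] k)).ofConv ∘ₗ mulLeft k x) = counit (R := k) x • 1 := by
  ext c
  simp

def IsTwistedOn (V : Submodule k H) (f w : WithConv (H →ₗ[k] k)) : Prop :=
  ∀ x ∈ V, toConv (f.ofConv ∘ₗ mulLeft k x) = f x • w

namespace IsTwistedOn
variable {V : Submodule k H} {f g w v : WithConv (H →ₗ[k] k)}

lemma of_convMul_eq_smul {u : (WithConv (H →ₗ[k] k))ˣ}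
    (h : ∀ x ∈ V, toConv (f.ofConv ∘ₗ mulLeft k x) * u = f x • w) :
    IsTwistedOn V f (w * ↑u⁻¹) := by
  intro x hx
  rw [← smul_mul_assoc, ← h x hx, mul_assoc, u.mul_inv, mul_one]

lemma apply_mul (h : IsTwistedOn V f w) {x : H} (hx : x ∈ V) (c : H) :
    f (x * c) = f x * w c := by
  simpa using congr($(h x hx) c)

variable (hV : ∀ x ∈ V, comul (R := k) x ∈ range (mapIncl V V))
include hV

lemma convMul (hf : IsTwistedOn V f w) (hg : IsTwistedOn V g v) :
    IsTwistedOn V (f * g) (w * v) := by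
  intro x hx
  obtain ⟨ℛx, hℛx⟩ := exists_repr_mem_of_comul_mem_range (hV x hx)
  rw [toConv_comp_mulLeft_convMul ℛx, ℛx.convMul_apply, Finset.sum_smul]
  refine Finset.sum_congr rfl fun i _ => ?_
  rw [hf _ (hℛx i).1, hg _ (hℛx i).2, smul_mul_smul_comm]

lemma inv {u w : (WithConv (H →ₗ[k] k))ˣ} (h : IsTwistedOn V u w) :
    IsTwistedOn V ↑u⁻¹ ↑w⁻¹ := by
  have key : ∀ y ∈ V, ∀ c : H, (toConv ((↑u⁻¹ : WithConv (H →ₗ[k] k)).ofConv ∘ₗ mulRight k c) *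
      ↑u) y = ((↑w⁻¹ : WithConv (H →ₗ[k] k)) c • 1 : WithConv (H →ₗ[k] k)) y := by
    intro y hy c
    obtain ⟨ℛy, hℛy⟩ := exists_repr_mem_of_comul_mem_range (hV y hy)
    -- `G c` is the left-hand side; translating `u⁻¹ * u = 1` by `y` shows `G * w = ε y • 1`.
    set G : WithConv (H →ₗ[k] k) := ∑ i ∈ ℛy.index, (↑u : WithConv (H →ₗ[k] k)) (ℛy.right i) •
      toConv ((↑u⁻¹ : WithConv (H →ₗ[k] k)).ofConv ∘ₗ mulLeft k (ℛy.left i))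
    have hGw : G * w = counit (R := k) y • 1 := by
      rw [← toConv_comp_mulLeft_convOne, ← u.inv_mul, toConv_comp_mulLeft_convMul ℛy,
        Finset.sum_mul]
      refine Finset.sum_congr rfl fun i _ => ?_
      rw [h _ (hℛy i).2, smul_mul_assoc, mul_smul_comm]
    have hG : G = counit (R := k) y • ↑w⁻¹ := by
      rw [← mul_one G, ← w.mul_inv, ← mul_assoc, hGw, smul_mul_assoc, one_mul]
    simpa [G, ℛy.convMul_apply, mul_comm] using congr($hG c)
  intro x hx
  ext c
  calc (↑u⁻¹ : WithConv (H →ₗ[k] k)) (x * c)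
      = (toConv ((↑u⁻¹ : WithConv (H →ₗ[k] k)).ofConv ∘ₗ mulRight k c) * ↑u * ↑u⁻¹) x := by
        rw [mul_assoc, u.mul_inv, mul_one]; rfl
    _ = (((↑w⁻¹ : WithConv (H →ₗ[k] k)) c • 1 : WithConv (H →ₗ[k] k)) * ↑u⁻¹) x :=
        convMul_apply_congr_left hV (key · · c) _ hx
    _ = _ := by simp [mul_comm]

end IsTwistedOn
end Bialgebra

lemma IsTwistedOn.apply_antipode {k H : Type*} [CommSemiring k] [Semiring H] [HopfAlgebra k H]
    {V W : Submodule k H} (hW : ∀ x ∈ W, comul (R := k) x ∈ range (mapIncl W W))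
    (hSW : ∀ x ∈ W, HopfAlgebra.antipode k x ∈ V) {f : WithConv (H →ₗ[k] k)}
    {u : (WithConv (H →ₗ[k] k))ˣ} (h : IsTwistedOn V f u) {x : H} (hx : x ∈ W) :
    f (HopfAlgebra.antipode k x) = f 1 * (↑u⁻¹ : WithConv (H →ₗ[k] k)) x := by
  have hSu : ∀ y ∈ W, (toConv (f.ofConv ∘ₗ HopfAlgebra.antipode k) * ↑u) y =
      (f 1 • 1 : WithConv (H →ₗ[k] k)) y := by
    intro y hy
    obtain ⟨ℛy, hℛy⟩ := exists_repr_mem_of_comul_mem_range (hW y hy)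
    calc _ = f (∑ i ∈ ℛy.index, HopfAlgebra.antipode k (ℛy.left i) * ℛy.right i) := by
          rw [ℛy.convMul_apply, map_sum]
          exact Finset.sum_congr rfl fun i _ => (h.apply_mul (hSW _ (hℛy i).1) _).symm
      _ = _ := by simp [HopfAlgebra.sum_antipode_mul_eq_smul, mul_comm]
  calc f (HopfAlgebra.antipode k x)
      = (toConv (f.ofConv ∘ₗ HopfAlgebra.antipode k) * ↑u * ↑u⁻¹) x := by
        rw [mul_assoc, u.mul_inv, mul_one]; rfl
    _ = ((f 1 • 1 : WithConv (H →ₗ[k] k)) * ↑u⁻¹) x := convMul_apply_congr_left hW hSu _ hx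
    _ = _ := by simp

section TwistingSystem
variable {k H : Type*} [CommSemiring k] [Semiring H] [HopfAlgebra k H]
  {𝒜 : ℤ → Submodule k H} {a : ℤ → (WithConv (H →ₗ[k] k))ˣ}
  (hΔ : ∀ n, ∀ x ∈ 𝒜 n, comul (R := k) x ∈ range (mapIncl (𝒜 n) (𝒜 n)))
  (hS : ∀ n, ∀ x ∈ 𝒜 n, HopfAlgebra.antipode k x ∈ 𝒜 (-n))
  (htw : ∀ i n, IsTwistedOn (𝒜 n) (a i) ↑(a (i + n) * (a n)⁻¹))
  (hone : ∀ i, (a i : WithConv (H →ₗ[k] k)) 1 = 1)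

include hΔ htw in
lemma isTwistedOn_mul_inv (p q n : ℤ) :
    IsTwistedOn (𝒜 n) ↑(a p * (a q)⁻¹) ↑(a (p + n) * (a (q + n))⁻¹) := by
  have h := (htw p n).convMul (hΔ n) ((htw q n).inv (hΔ n))
  rw [← Units.val_mul, ← Units.val_mul] at h
  convert h using 2
  group

include hone in
lemma mul_inv_apply_one (p q : ℤ) : (↑(a p * (a q)⁻¹) : WithConv (H →ₗ[k] k)) 1 = 1 := by
  rw [Units.val_mul, convMul_apply_one, hone, one_mul,
    apply_one_eq_one_of_convMul_eq_one (a q).mul_inv (hone q)]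

include hΔ hS htw hone

lemma mul_inv_apply_antipode (p q : ℤ) {j : ℤ} {x : H} (hx : x ∈ 𝒜 j) :
    (↑(a p * (a q)⁻¹) : WithConv (H →ₗ[k] k)) (HopfAlgebra.antipode k x) =
      (↑(a (q - j) * (a (p - j))⁻¹) : WithConv (H →ₗ[k] k)) x := by
  have h := (isTwistedOn_mul_inv hΔ htw p q (-j)).apply_antipode (hΔ j) (hS j) hx
  rwa [mul_inv_apply_one hone, one_mul, mul_inv_rev, inv_inv, ← sub_eq_add_neg,
    ← sub_eq_add_neg] at h

lemma mul_inv_apply_antipode_antipode (p q : ℤ) {j : ℤ} {x : H} (hx : x ∈ 𝒜 j) :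
    (↑(a p * (a q)⁻¹) : WithConv (H →ₗ[k] k))
      (HopfAlgebra.antipode k (HopfAlgebra.antipode k x)) =
      (↑(a p * (a q)⁻¹) : WithConv (H →ₗ[k] k)) x := by
  rw [mul_inv_apply_antipode hΔ hS htw hone p q (hS j x hx),
    mul_inv_apply_antipode hΔ hS htw hone _ _ hx]
  simp

lemma mul_inv_apply_antipode_iterate_two_mul (p q : ℤ) {j : ℤ} (m : ℕ) {x : H}
    (hx : x ∈ 𝒜 j) :
    (↑(a p * (a q)⁻¹) : WithConv (H →ₗ[k] k)) ((HopfAlgebra.antipode k)^[2 * m] x) =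
      (↑(a p * (a q)⁻¹) : WithConv (H →ₗ[k] k)) x := by
  induction m generalizing x with
  | zero => rfl
  | succ m ih =>
    have hSSx : HopfAlgebra.antipode k (HopfAlgebra.antipode k x) ∈ 𝒜 j := by
      simpa using hS (-j) _ (hS j x hx)
    rw [mul_add_one, Function.iterate_add_apply]
    exact (ih hSSx).trans (mul_inv_apply_antipode_antipode hΔ hS htw hone p q hx)

lemma mul_inv_apply_antipode_iterate_of_even (p q : ℤ) {j : ℤ} {m : ℕ} (hm : Even m) {x : H}
    (hx : x ∈ 𝒜 j) :
    (↑(a p * (a q)⁻¹) : WithConv (H →ₗ[k] k)) ((HopfAlgebra.antipode k)^[m] x) =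
      (↑(a p * (a q)⁻¹) : WithConv (H →ₗ[k] k)) x := by
  obtain ⟨r, rfl⟩ := hm
  rw [← two_mul]
  exact mul_inv_apply_antipode_iterate_two_mul hΔ hS htw hone p q r hx

lemma mul_inv_apply_antipode_iterate_of_odd (p q : ℤ) {j : ℤ} {m : ℕ} (hm : Odd m) {x : H}
    (hx : x ∈ 𝒜 j) :
    (↑(a p * (a q)⁻¹) : WithConv (H →ₗ[k] k)) ((HopfAlgebra.antipode k)^[m] x) =
      (↑(a (q - j) * (a (p - j))⁻¹) : WithConv (H →ₗ[k] k)) x := by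
  obtain ⟨r, rfl⟩ := hm
  rw [Function.iterate_add_apply]
  exact (mul_inv_apply_antipode_iterate_two_mul hΔ hS htw hone p q r (hS j x hx)).trans
    (mul_inv_apply_antipode hΔ hS htw hone p q hx)

end TwistingSystem

theorem statement7 {k H : Type*} [Field k] [Ring H] [HopfAlgebra k H]
    (𝒜 : ℤ → Submodule k H)
    (hT2 : ∀ n : ℤ, ∀ b ∈ 𝒜 n,
      Coalgebra.comul (R := k) b ∈ LinearMap.range (TensorProduct.mapIncl (𝒜 n) (𝒜 n)))
    (hS : ∀ n : ℤ, ∀ a ∈ 𝒜 n, HopfAlgebra.antipode (R := k) a ∈ 𝒜 (-n))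
    (α αinv : ℤ → (H →ₗ[k] k))
    (hinv : ∀ i : ℤ, conv (α i) (αinv i) = Coalgebra.counit ∧
      conv (αinv i) (α i) = Coalgebra.counit)
    (hone : ∀ i : ℤ, α i 1 = 1)
    (hzero : α 0 = Coalgebra.counit)
    (hsys : ∀ (i j : ℤ), ∀ a ∈ 𝒜 j, ∀ b : H,
      conv ((α i) ∘ₗ LinearMap.mulLeft k a) (α j) b = α i a * α (i + j) b) :
    ∀ (i j : ℤ) (m : ℕ), ∀ a ∈ 𝒜 j,
      (Even m → α i ((fun x => HopfAlgebra.antipode (R := k) x)^[m] a) = α i a) ∧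
      (Odd m → α i ((fun x => HopfAlgebra.antipode (R := k) x)^[m] a) =
        conv (α (-j)) (αinv (i - j)) a) ∧
      (Even m → αinv i ((fun x => HopfAlgebra.antipode (R := k) x)^[m] a) = αinv i a) ∧
      (Odd m → αinv i ((fun x => HopfAlgebra.antipode (R := k) x)^[m] a) =
        conv (α (i - j)) (αinv (-j)) a) := by
  let u : ℤ → (WithConv (H →ₗ[k] k))ˣ := fun i =>
    ⟨toConv (α i), toConv (αinv i), by rw [← toConv_conv, (hinv i).1, toConv_counit],
      by rw [← toConv_conv, (hinv i).2, toConv_counit]⟩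
  have hu0 : u 0 = 1 := Units.ext (by simp [u, hzero, toConv_counit])
  have htw : ∀ i n, IsTwistedOn (𝒜 n) (u i) ↑(u (i + n) * (u n)⁻¹) := fun i n => by
    rw [Units.val_mul]
    exact IsTwistedOn.of_convMul_eq_smul fun x hx =>
      WithConv.ext (LinearMap.ext (hsys i n x hx))
  have hα : ∀ i, α i = (↑(u i * (u 0)⁻¹) : WithConv (H →ₗ[k] k)).ofConv := by simp [hu0, u]
  have hαinv : ∀ i, αinv i = (↑(u 0 * (u i)⁻¹) : WithConv (H →ₗ[k] k)).ofConv := by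
    simp [hu0, u]
  intro i j m x hx
  rw [hα i, hαinv i]
  refine ⟨fun hm => ?_, fun hm => ?_, fun hm => ?_, fun hm => ?_⟩
  · exact mul_inv_apply_antipode_iterate_of_even hT2 hS htw hone i 0 hm hx
  · exact (mul_inv_apply_antipode_iterate_of_odd hT2 hS htw hone i 0 hm hx).trans
      (by rw [zero_sub]; rfl)
  · exact mul_inv_apply_antipode_iterate_of_even hT2 hS htw hone 0 i hm hx
  · exact (mul_inv_apply_antipode_iterate_of_odd hT2 hS htw hone 0 i hm hx).trans
      (by rw [zero_sub]; rfl)
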